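/- For n ≥ 2, the Sylow 3-subgroup H_n is not normal in E_n. Specifically, with τ_n ∈ E_n defined by τ_1 = (12) and τ_n = ((τ_{n-1},1,1),(12)), and a = ((1,1,1),(123)) ∈ H_n, we have τ_n a τ_n^{-1} = ((1, τ_{n-1}^{-1}, τ_{n-1}), (132)) ∉ H_n. -/

import Mathlib

open Equiv

/-- Leaves of the regular ternary rooted tree of height `n`. -/
def L : ℕ → Type
  | 0 => PUnit
  | n+1 => Fin 3 × L n

instance Ldec : ∀ n, DecidableEq (L n)
  | 0 => inferInstanceAs (DecidableEq PUnit)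
  | n+1 => letI := Ldec n; inferInstanceAs (DecidableEq (Fin 3 × L n))

instance Lfin : ∀ n, Fintype (L n)
  | 0 => inferInstanceAs (Fintype PUnit)
  | n+1 => letI := Lfin n; inferInstanceAs (Fintype (Fin 3 × L n))

/-- The wreath-product construction `G ≀ S_3` (as a type). -/
def W (G : Type) : Type := (Fin 3 → G) × Equiv.Perm (Fin 3)

instance Wgroup (G : Type) [Group G] : Group (W G) where
  mul x y := (fun i => x.1 (y.2 i) * y.1 i, x.2 * y.2)
  one := (fun _ => 1, 1)
  inv x := (fun i => (x.1 (x.2⁻¹ i))⁻¹, x.2⁻¹)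
  mul_assoc x y z := Prod.ext (funext fun i => mul_assoc _ _ _) (mul_assoc _ _ _)
  one_mul x := Prod.ext (funext fun i => one_mul _) (one_mul _)
  mul_one x := Prod.ext (funext fun i => mul_one _) (mul_one _)
  inv_mul_cancel x := Prod.ext (funext fun i => by
      show (x.1 (x.2⁻¹ (x.2 i)))⁻¹ * x.1 i = 1
      rw [show x.2⁻¹ (x.2 i) = i from x.2.symm_apply_apply i, inv_mul_cancel]) (inv_mul_cancel _)

/-- `A n` is the automorphism group of the ternary rooted tree of height `n`,
realized as the `n`-fold iterated wreath product of `S_3 = Aut(T_1)`. -/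
def A : ℕ → Type
  | 0 => PUnit
  | n+1 => W (A n)

instance Agroup : ∀ n, Group (A n)
  | 0 => inferInstanceAs (Group PUnit)
  | n+1 => letI := Agroup n; Wgroup (A n)

/-- The faithful action of `A n` on the `3^n` leaves of the tree. -/
def toPerm : ∀ n, A n →* Equiv.Perm (L n)
  | 0 => 1
  | n+1 =>
    { toFun := fun x : W (A n) => Equiv.prodShear x.2 (fun i => toPerm n (x.1 i))
      map_one' := by
        apply Equiv.ext
        intro l
        show ((1 : Equiv.Perm (Fin 3)) l.1, toPerm n (1 : A n) l.2) = l
        rw [map_one]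
        exact Prod.ext rfl rfl
      map_mul' := by
        intro x y
        apply Equiv.ext
        intro l
        show ((x * y).2 l.1, toPerm n ((x * y).1 l.1) l.2)
          = (x.2 (y.2 l.1), toPerm n (x.1 (y.2 l.1)) ((toPerm n (y.1 l.1)) l.2))
        refine Prod.ext rfl ?_
        show toPerm n (x.1 (y.2 l.1) * y.1 l.1) l.2 = _
        rw [map_mul]
        rfl }

/-- Restriction `Aut(T_{n+1}) → Aut(T_n)` to the subtree spanned by the first `n` levels. -/
def res : ∀ n, A (n+1) →* A n
  | 0 => 1
  | n+1 =>
    { toFun := fun x : W (A (n+1)) => ((fun i => res n (x.1 i), x.2) : W (A n))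
      map_one' := Prod.ext (funext fun _ => map_one (res n)) rfl
      map_mul' := fun x y => Prod.ext (funext fun i => map_mul (res n) _ _) rfl }

/-- Restriction `Aut(T_{n+2}) → Aut(T_2)`. -/
def resTo2 : ∀ n, A (n+2) →* A 2
  | 0 => MonoidHom.id _
  | n+1 => (resTo2 n).comp (res (n+2))

/-- `sgn_2` : the sign of the permutation induced on the 9 leaves of `T_2`. -/
def sgn2 (n : ℕ) : A (n+2) →* ℤˣ :=
  Equiv.Perm.sign.comp ((toPerm 2).comp (resTo2 n))

/-- Given a subgroup `H ≤ Aut(T_n)`, the subgroup of `Aut(T_{n+1})` consisting of elements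
all of whose three level-1 components lie in `H` (the base of the wreath product `H ≀ S_3`). -/
def lift1 {n : ℕ} (Hn : Subgroup (A n)) : Subgroup (A (n+1)) where
  carrier := {x : W (A n) | ∀ i, x.1 i ∈ Hn}
  one_mem' := fun _ => Hn.one_mem
  mul_mem' := fun {x y} hx hy i => Hn.mul_mem (hx _) (hy _)
  inv_mem' := fun {x} hx i => Hn.inv_mem (hx _)

/-- The groups `E_n`: `E_1 = Aut(T_1)` and `E_n = (E_{n-1} ≀ Aut(T_1)) ∩ ker sgn_2`. -/
def E : ∀ n, Subgroup (A n)
  | 0 => ⊤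
  | 1 => ⊤
  | n+2 => lift1 (E (n+1)) ⊓ (sgn2 n).ker

/-- The projection onto the top (level-1) symmetric group component. -/
def sndHom (n : ℕ) : A (n+1) →* Equiv.Perm (Fin 3) where
  toFun := fun x : W (A n) => x.2
  map_one' := rfl
  map_mul' := fun _ _ => rfl

/-- The cyclic subgroup `C_3 ≤ S_3`. -/
def C3 : Subgroup (Equiv.Perm (Fin 3)) := Subgroup.zpowers (finRotate 3)

/-- The groups `H_n = [C_3]^n`, the iterated wreath product of cyclic groups of order 3. -/
def Hgp : ∀ n, Subgroup (A n)
  | 0 => ⊤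
  | n+1 => lift1 (Hgp n) ⊓ C3.comap (sndHom n)

/-- The elements `ν_n`: `ν_1 = (12)`, `ν_n = ((ν_{n-1},1,1),1)`. -/
def ν : ∀ n, A n
  | 0 => 1
  | 1 => ((fun _ => (1 : A 0), Equiv.swap 0 1) : W (A 0))
  | n+2 => ((fun i => if i = 0 then ν (n+1) else 1, 1) : W (A (n+1)))

/-- The elements `τ_n`: `τ_1 = (12)`, `τ_n = ((τ_{n-1},1,1),(12))`. -/
def τ : ∀ n, A n
  | 0 => 1
  | 1 => ((fun _ => (1 : A 0), Equiv.swap 0 1) : W (A 0))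
  | n+2 => ((fun i => if i = 0 then τ (n+1) else 1, Equiv.swap 0 1) : W (A (n+1)))

/-- Truncation of a leaf of `T_n` to the vertex at level `m` below it. -/
def take : ∀ (n m : ℕ), L n → L m
  | _, 0, _ => PUnit.unit
  | 0, m+1, _ => ((0, take 0 m PUnit.unit) : Fin 3 × L m)
  | n+1, m+1, l => ((l.1, take n m l.2) : Fin 3 × L m)

/-! Induction on the level shows that the components of `τ_n` lie in `E_{n-1}`, and its action
on the 9 leaves of `T_2` is even, so `τ_n ∈ E_n`; the top permutation `(12)` of every `τ_k` is
odd, hence not in `C_3`, so `τ_{n-1} ∉ H_{n-1}`. Conjugating the top rotation `a ∈ H_n ∩ E_n`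
by `τ_n` puts `τ_{n-1}` into a level-1 component, so `τ_n a τ_n⁻¹ ∉ H_n` and `H_n` is not
normal in `E_n`. -/

def W.top {G : Type} [One G] (ρ : Perm (Fin 3)) : W G := (fun _ => 1, ρ)

theorem W.conj_top {G : Type} [Group G] (x : W G) (ρ : Perm (Fin 3)) :
    x * W.top ρ * x⁻¹
      = ((fun i => x.1 (ρ (x.2⁻¹ i)) * (x.1 (x.2⁻¹ i))⁻¹, x.2 * ρ * x.2⁻¹) : W G) :=
  Prod.ext (funext fun i => congrArg (· * (x.1 (x.2⁻¹ i))⁻¹) (mul_one (x.1 (ρ (x.2⁻¹ i)))))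
    rfl

theorem Subgroup.not_normal_subgroupOf_of_conj_notMem {G : Type} [Group G]
    {H K : Subgroup G} {g x : G} (hg : g ∈ K) (hxH : x ∈ H) (hxK : x ∈ K)
    (hconj : g * x * g⁻¹ ∉ H) : ¬ (H.subgroupOf K).Normal := fun hN =>
  hconj (Subgroup.mem_subgroupOf.mp (hN.conj_mem ⟨x, hxK⟩ hxH ⟨g, hg⟩))

theorem mem_Hgp_succ {n : ℕ} {x : A (n+1)} :
    x ∈ Hgp (n+1) ↔ (∀ i, (x : W (A n)).1 i ∈ Hgp n) ∧ (x : W (A n)).2 ∈ C3 := Iff.rfl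

theorem mem_E_succ_succ {n : ℕ} {x : A (n+2)} :
    x ∈ E (n+2) ↔ (∀ i, (x : W (A (n+1))).1 i ∈ E (n+1)) ∧
      Perm.sign (toPerm 2 (resTo2 n x)) = 1 := Iff.rfl

theorem swap_notMem_C3 : swap (0 : Fin 3) 1 ∉ C3 := by
  rintro ⟨k, hk⟩
  have hsign := congrArg Perm.sign hk
  rw [map_zpow, show Perm.sign (finRotate 3) = 1 by decide, one_zpow,
    show Perm.sign (swap (0 : Fin 3) 1) = -1 by decide] at hsign
  exact absurd hsign (by decide)

theorem resTo2_top : ∀ (n : ℕ) (σ : Perm (Fin 3)),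
    resTo2 n (W.top σ : W (A (n+1))) = (W.top σ : W (A 1))
  | 0, _ => rfl
  | n+1, σ =>
    have hres : res (n+2) (W.top σ : W (A (n+2))) = (W.top σ : W (A (n+1))) :=
      Prod.ext (funext fun _ => map_one (res (n+1))) rfl
    (congrArg (resTo2 n) hres).trans (resTo2_top n σ)

theorem τ_succ_succ (n : ℕ) :
    τ (n+2) = (((fun i => if i = 0 then τ (n+1) else 1, swap 0 1) : W (A (n+1))) : A (n+2)) :=
  rfl

theorem res_τ : ∀ n, res n (τ (n+1)) = τ n
  | 0 => rfl
  | 1 => rfl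
  | n+2 => Prod.ext (funext fun i => by
      by_cases hi : i = 0
      · subst hi; exact res_τ (n+1)
      · exact (congrArg (res (n+1)) (if_neg hi)).trans ((map_one _).trans (if_neg hi).symm)) rfl

theorem resTo2_τ : ∀ n, resTo2 n (τ (n+2)) = τ 2
  | 0 => rfl
  | n+1 => (congrArg (resTo2 n) (res_τ (n+2))).trans (resTo2_τ n)

theorem τ_mem_E : ∀ n, τ (n+1) ∈ E (n+1)
  | 0 => trivial
  | n+1 => by
    refine mem_E_succ_succ.mpr ⟨fun i => ?_, ?_⟩
    · show (if i = 0 then τ (n+1) else 1) ∈ E (n+1)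
      split_ifs
      exacts [τ_mem_E n, (E (n+1)).one_mem]
    · rw [resTo2_τ]
      decide

theorem τ_notMem_Hgp (n : ℕ) : τ (n+1) ∉ Hgp (n+1) := fun h => by
  have hswap : (τ (n+1) : W (A n)).2 = swap 0 1 := by cases n <;> rfl
  exact swap_notMem_C3 (hswap ▸ (mem_Hgp_succ.mp h).2)

/-- For `n = m+2 ≥ 2`, with `τ_n ∈ E_n` and `a = ((1,1,1),(123)) ∈ H_n`,
we have `τ_n a τ_n⁻¹ = ((1, τ_{n-1}⁻¹, τ_{n-1}), (132)) ∉ H_n`; in particular the Sylow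
3-subgroup `H_n` is not normal in `E_n`. -/
theorem H_not_normal_in_E (m : ℕ) :
    let a : A (m+2) := ((fun _ => 1, finRotate 3) : W (A (m+1)))
    τ (m+2) ∈ E (m+2) ∧
    a ∈ Hgp (m+2) ∧
    τ (m+2) * a * (τ (m+2))⁻¹
      = (((fun i => if i = 0 then 1 else if i = 1 then (τ (m+1))⁻¹ else τ (m+1),
            (finRotate 3)⁻¹) : W (A (m+1))) : A (m+2)) ∧
    τ (m+2) * a * (τ (m+2))⁻¹ ∉ Hgp (m+2) ∧
    ¬ ((Hgp (m+2)).subgroupOf (E (m+2))).Normal := by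
  intro a
  have hτE : τ (m+2) ∈ E (m+2) := τ_mem_E (m+1)
  have haH : a ∈ Hgp (m+2) :=
    mem_Hgp_succ.mpr ⟨fun _ => (Hgp (m+1)).one_mem, Subgroup.mem_zpowers _⟩
  have haE : a ∈ E (m+2) := by
    refine mem_E_succ_succ.mpr ⟨fun _ => (E (m+1)).one_mem, ?_⟩
    rw [show a = W.top (finRotate 3) from rfl, resTo2_top]
    decide
  have hconj : τ (m+2) * a * (τ (m+2))⁻¹
      = (((fun i => if i = 0 then 1 else if i = 1 then (τ (m+1))⁻¹ else τ (m+1),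
            (finRotate 3)⁻¹) : W (A (m+1))) : A (m+2)) := by
    refine (W.conj_top (τ (m+2) : W (A (m+1))) (finRotate 3)).trans
      (Prod.ext (funext fun i => ?_) ?_)
    · fin_cases i <;> simp [τ_succ_succ, swap_inv, swap_apply_def]
    · show swap 0 1 * finRotate 3 * (swap 0 1)⁻¹ = (finRotate 3)⁻¹
      decide
  have hconj_notMem : τ (m+2) * a * (τ (m+2))⁻¹ ∉ Hgp (m+2) := fun h =>
    τ_notMem_Hgp m (by simpa [hconj] using (mem_Hgp_succ.mp h).1 2)
  exact ⟨hτE, haH, hconj, hconj_notMem,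
    Subgroup.not_normal_subgroupOf_of_conj_notMem hτE haH haE hconj_notMem⟩
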